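/- arXiv:math-ph/0409029 — 3 statements merged into one kernel-verified Lean document; each statement's English description precedes it below -/
import Mathlib

section
/- For every probability measure r on ℝ, every c ≥ 0 and every t ∈ ℝ, the characteristic function of the compound Poisson measure satisfies ∫_ℝ e^{ist} dρ_{c,r}(s) = exp(c (∫_ℝ e^{ist} dr(s) − 1)) = exp(c ∫_ℝ (e^{ist} − 1) dr(s)); i.e., ρ_{c,r} has the purely Poisson Lévy characteristic ψ(t) = c ∫ (e^{ist} − 1) dr(s). -/
open MeasureTheory Complex

noncomputable def mconv (μ ν : Measure ℝ) : Measure ℝ :=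
  (μ.prod ν).map (fun p => p.1 + p.2)

noncomputable def convPow (r : Measure ℝ) : ℕ → Measure ℝ
  | 0 => Measure.dirac 0
  | n + 1 => mconv (convPow r n) r

noncomputable def cPoisson (c : ℝ) (r : Measure ℝ) : Measure ℝ :=
  Measure.sum (fun n : ℕ =>
    ENNReal.ofReal (Real.exp (-c) * c ^ n / n.factorial) • convPow r n)

lemma convPow_prob (r : Measure ℝ) [IsProbabilityMeasure r] (n : ℕ) :
    IsProbabilityMeasure (convPow r n) := by
  induction n with
  | zero => simpa [convPow] using inferInstanceAs (IsProbabilityMeasure (Measure.dirac (0:ℝ)))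
  | succ n ih =>
    have := ih
    exact Measure.isProbabilityMeasure_map (by fun_prop : AEMeasurable (fun p : ℝ × ℝ => p.1 + p.2) ((convPow r n).prod r))

lemma norm_exp_I (s t : ℝ) : ‖Complex.exp (Complex.I * s * t)‖ = 1 := by
  rw [Complex.norm_exp]
  simp [mul_comm, mul_assoc]

lemma integrable_exp_I (μ : Measure ℝ) [IsFiniteMeasure μ] (t : ℝ) :
    Integrable (fun s : ℝ => Complex.exp (Complex.I * s * t)) μ := by
  apply (integrable_const (1:ℝ)).mono'
  · exact (Complex.continuous_exp.comp (by continuity)).aestronglyMeasurable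
  · filter_upwards with s using by rw [norm_exp_I]

lemma convPow_char (r : Measure ℝ) [IsProbabilityMeasure r] (t : ℝ) (n : ℕ) :
    ∫ s, Complex.exp (Complex.I * s * t) ∂(convPow r n)
      = (∫ s, Complex.exp (Complex.I * s * t) ∂r) ^ n := by
  induction n with
  | zero => simp [convPow]
  | succ n ih =>
    have := convPow_prob r n
    have hm : AEStronglyMeasurable (fun s : ℝ => Complex.exp (Complex.I * s * t))
        (((convPow r n).prod r).map (fun p => p.1 + p.2)) :=
      (Continuous.aestronglyMeasurable (by continuity))
    rw [convPow, mconv,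
      integral_map (φ := fun p : ℝ × ℝ => p.1 + p.2) ((measurable_fst.add measurable_snd).aemeasurable) hm]
    have : ∀ p : ℝ × ℝ, Complex.exp (Complex.I * ↑(p.1 + p.2) * t)
        = Complex.exp (Complex.I * p.1 * t) * Complex.exp (Complex.I * p.2 * t) := by
      intro p
      rw [← Complex.exp_add]
      push_cast
      ring_nf
    simp_rw [this]
    rw [integral_prod_mul (f := fun s : ℝ => Complex.exp (Complex.I * s * t)) (g := fun s : ℝ => Complex.exp (Complex.I * s * t)), ih, pow_succ]

/-- the characteristic function of the compound Poisson measure is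
`exp (c (∫ e^{ist} dr(s) − 1)) = exp (c ∫ (e^{ist} − 1) dr(s))`. -/
theorem cPoisson_charFun
    (r : Measure ℝ) [IsProbabilityMeasure r] (c : ℝ) (hc : 0 ≤ c) (t : ℝ) :
    (∫ s, Complex.exp (Complex.I * s * t) ∂(cPoisson c r)
        = Complex.exp ((c : ℂ) * ((∫ s, Complex.exp (Complex.I * s * t) ∂r) - 1))) ∧
      (∫ s, Complex.exp (Complex.I * s * t) ∂(cPoisson c r)
        = Complex.exp ((c : ℂ) * ∫ s, (Complex.exp (Complex.I * s * t) - 1) ∂r)) := by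
  set φ := ∫ s, Complex.exp (Complex.I * s * t) ∂r with hφ
  have hnn : ∀ n : ℕ, (0:ℝ) ≤ Real.exp (-c) * c ^ n / n.factorial := fun n => by positivity
  -- total mass of cPoisson is finite (= 1)
  have hmass : ∀ n : ℕ, (ENNReal.ofReal (Real.exp (-c) * c ^ n / n.factorial) • convPow r n) Set.univ
      = ENNReal.ofReal (Real.exp (-c) * c ^ n / n.factorial) := by
    intro n
    have := convPow_prob r n
    simp
  have hfin : IsFiniteMeasure (cPoisson c r) := by
    constructor
    rw [cPoisson, Measure.sum_apply _ MeasurableSet.univ]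
    simp_rw [hmass]
    have : Summable (fun n : ℕ => Real.exp (-c) * c ^ n / n.factorial) := by
      simpa [mul_div_assoc] using (Real.summable_pow_div_factorial c).mul_left (Real.exp (-c))
    calc ∑' n, ENNReal.ofReal (Real.exp (-c) * c ^ n / n.factorial)
        = ENNReal.ofReal (∑' n, Real.exp (-c) * c ^ n / n.factorial) :=
          (ENNReal.ofReal_tsum_of_nonneg hnn this).symm
      _ < ⊤ := ENNReal.ofReal_lt_top
  have hint : Integrable (fun s : ℝ => Complex.exp (Complex.I * s * t)) (cPoisson c r) :=
    integrable_exp_I _ t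
  have key : ∫ s, Complex.exp (Complex.I * s * t) ∂(cPoisson c r)
      = ∑' n : ℕ, ((Real.exp (-c) * c ^ n / n.factorial : ℝ) : ℂ) * φ ^ n := by
    rw [cPoisson, integral_sum_measure hint]
    congr 1
    ext n
    have := convPow_prob r n
    rw [integral_smul_measure, convPow_char r t n, ENNReal.toReal_ofReal (hnn n)]
    simp [hφ]
  have hsum : ∑' n : ℕ, ((Real.exp (-c) * c ^ n / n.factorial : ℝ) : ℂ) * φ ^ n
      = Complex.exp ((c:ℂ) * (φ - 1)) := by
    have : ∀ n : ℕ, ((Real.exp (-c) * c ^ n / n.factorial : ℝ) : ℂ) * φ ^ n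
        = ((Real.exp (-c) : ℝ) : ℂ) * (((c:ℂ) * φ) ^ n / n.factorial) := by
      intro n
      push_cast
      ring
    simp_rw [this]
    rw [tsum_mul_left]
    have hexp : ∑' n : ℕ, ((c:ℂ) * φ) ^ n / n.factorial = Complex.exp ((c:ℂ) * φ) := by
      rw [Complex.exp_eq_exp_ℂ, NormedSpace.exp_eq_tsum_div]
    rw [hexp, Complex.ofReal_exp, ← Complex.exp_add]
    congr 1
    push_cast
    ring
  have h1 : ∫ s, Complex.exp (Complex.I * s * t) ∂(cPoisson c r)
      = Complex.exp ((c:ℂ) * (φ - 1)) := key.trans hsum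
  refine ⟨h1, h1.trans ?_⟩
  congr 1
  have : ∫ s, (Complex.exp (Complex.I * s * t) - 1) ∂r = φ - 1 := by
    rw [integral_sub (integrable_exp_I r t) (integrable_const 1)]
    simp [hφ]
  rw [this]
end

section
/- Fix C > 0, c > 0 and m ∈ ℕ, m ≥ 1. Let (r_ε)_{ε∈(0,1]} and r be probability measures on ℝ, all with support contained in [−C,C], such that r_ε converges weakly to r as ε ↘ 0. Let H : ℝ^m → ℝ be continuous with |H(s_1,…,s_m)| ≤ K e^{κ(|s_1|+⋯+|s_m|)} for some constants K, κ > 0. Then ∫_{ℝ^m} H d(ρ_{c,r_ε})^{⊗m} → ∫_{ℝ^m} H d(ρ_{c,r})^{⊗m} as ε ↘ 0, where (ρ_{c,r})^{⊗m} denotes the m-fold product measure. -/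
open MeasureTheory

/-! The map `r ↦ ρ_{c,r}` is continuous for weak convergence of probability measures: each
convolution power is a push-forward of a product measure, and the Poisson mixture converges
uniformly because its weights are summable. Hence `(ρ_{c,r_ε})^{⊗m} → (ρ_{c,r})^{⊗m}` weakly.
Since `r_ε` lives on `[-C, C]`, the exponential moments `∫ e^{θ|x|} dρ_{c,r_ε} ≤ e^{c(e^{θC}-1)}`
are bounded uniformly in `ε`; so `∫ H²` is uniformly bounded, and truncating `H` at height `R`
changes every integral by at most `O(1/R)`, which reduces the claim to bounded continuous
functions. -/

open Set Filter Topology ENNReal ProbabilityTheory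

noncomputable def expMoment (θ : ℝ) (μ : Measure ℝ) : ℝ≥0∞ :=
  ∫⁻ x, ENNReal.ofReal (Real.exp (θ * |x|)) ∂μ

noncomputable def poissonWeight (c : ℝ) (n : ℕ) : ℝ :=
  Real.exp (-c) * c ^ n / n.factorial

lemma poissonWeight_nonneg {c : ℝ} (hc : 0 ≤ c) (n : ℕ) : 0 ≤ poissonWeight c n := by
  unfold poissonWeight; positivity

lemma hasSum_poissonWeight {c : ℝ} (hc : 0 ≤ c) : HasSum (poissonWeight c) 1 :=
  hasSum_one_poissonMeasure ⟨c, hc⟩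

lemma hasSum_poissonWeight_mul_pow {c a : ℝ} (hc : 0 ≤ c) (ha : 0 ≤ a) :
    HasSum (fun n => poissonWeight c n * a ^ n) (Real.exp (c * (a - 1))) := by
  have h := (hasSum_poissonWeight (mul_nonneg hc ha)).mul_left (Real.exp (c * (a - 1)))
  rw [mul_one] at h
  have hterm : ∀ n, poissonWeight c n * a ^ n =
      Real.exp (c * (a - 1)) * poissonWeight (c * a) n := fun n => by
    simp only [poissonWeight]
    rw [mul_sub, mul_one, Real.exp_sub, Real.exp_neg, Real.exp_neg]
    field_simp
    ring
  simpa only [hterm] using h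

instance isProbabilityMeasure_mconv (μ ν : Measure ℝ) [IsProbabilityMeasure μ]
    [IsProbabilityMeasure ν] : IsProbabilityMeasure (mconv μ ν) :=
  Measure.isProbabilityMeasure_map (by fun_prop)

instance isProbabilityMeasure_convPow (r : Measure ℝ) [IsProbabilityMeasure r] (n : ℕ) :
    IsProbabilityMeasure (convPow r n) := by
  induction n with
  | zero => exact Measure.dirac.isProbabilityMeasure
  | succ n ih => exact isProbabilityMeasure_mconv _ _

lemma lintegral_cPoisson (c : ℝ) (r : Measure ℝ) (f : ℝ → ℝ≥0∞) :
    ∫⁻ x, f x ∂(cPoisson c r) =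
      ∑' n, ENNReal.ofReal (poissonWeight c n) * ∫⁻ x, f x ∂(convPow r n) := by
  simp only [cPoisson, lintegral_sum_measure, lintegral_smul_measure, poissonWeight, smul_eq_mul]

lemma integral_cPoisson {c : ℝ} (hc : 0 ≤ c) {r : Measure ℝ} {f : ℝ → ℝ}
    (hf : Integrable f (cPoisson c r)) :
    ∫ x, f x ∂(cPoisson c r) = ∑' n, poissonWeight c n * ∫ x, f x ∂(convPow r n) := by
  rw [cPoisson, integral_sum_measure hf]
  simp only [integral_smul_measure, smul_eq_mul]
  congr 1 with n
  exact congrArg (· * _) (ENNReal.toReal_ofReal (poissonWeight_nonneg hc n))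

lemma isProbabilityMeasure_cPoisson {c : ℝ} (hc : 0 ≤ c) (r : Measure ℝ)
    [IsProbabilityMeasure r] : IsProbabilityMeasure (cPoisson c r) := by
  constructor
  rw [← lintegral_one, lintegral_cPoisson]
  simp only [lintegral_one, measure_univ, mul_one]
  rw [← ENNReal.ofReal_tsum_of_nonneg (poissonWeight_nonneg hc) (hasSum_poissonWeight hc).summable,
    (hasSum_poissonWeight hc).tsum_eq, ENNReal.ofReal_one]

lemma expMoment_mconv_le {θ : ℝ} (hθ : 0 ≤ θ) (μ ν : Measure ℝ) [SFinite ν] :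
    expMoment θ (mconv μ ν) ≤ expMoment θ μ * expMoment θ ν := by
  rw [expMoment, mconv, lintegral_map (by fun_prop) (by fun_prop), expMoment, expMoment,
    ← lintegral_prod_mul (by fun_prop) (by fun_prop)]
  refine lintegral_mono fun p => ?_
  rw [← ENNReal.ofReal_mul (Real.exp_nonneg _), ← Real.exp_add, ← mul_add]
  gcongr
  exact abs_add_le _ _

lemma expMoment_convPow_le {θ : ℝ} (hθ : 0 ≤ θ) (r : Measure ℝ) [SFinite r] (n : ℕ) :
    expMoment θ (convPow r n) ≤ expMoment θ r ^ n := by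
  induction n with
  | zero => simp [convPow, expMoment]
  | succ n ih =>
    calc expMoment θ (convPow r (n + 1)) ≤ expMoment θ (convPow r n) * expMoment θ r :=
          expMoment_mconv_le hθ _ _
      _ ≤ expMoment θ r ^ (n + 1) := by rw [pow_succ]; gcongr

lemma expMoment_cPoisson_le {c θ A : ℝ} (hc : 0 ≤ c) (hθ : 0 ≤ θ) (hA : 0 ≤ A) {r : Measure ℝ}
    [SFinite r] (hr : expMoment θ r ≤ ENNReal.ofReal A) :
    expMoment θ (cPoisson c r) ≤ ENNReal.ofReal (Real.exp (c * (A - 1))) := by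
  have hsum := hasSum_poissonWeight_mul_pow hc hA
  calc expMoment θ (cPoisson c r)
      = ∑' n, ENNReal.ofReal (poissonWeight c n) * expMoment θ (convPow r n) :=
        lintegral_cPoisson c r _
    _ ≤ ∑' n, ENNReal.ofReal (poissonWeight c n * A ^ n) := by
        gcongr with n
        rw [ENNReal.ofReal_mul (poissonWeight_nonneg hc n), ENNReal.ofReal_pow hA]
        gcongr
        exact (expMoment_convPow_le hθ r n).trans (by gcongr)
    _ = ENNReal.ofReal (Real.exp (c * (A - 1))) := by
        rw [← ENNReal.ofReal_tsum_of_nonneg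
          (fun n => mul_nonneg (poissonWeight_nonneg hc n) (by positivity)) hsum.summable,
          hsum.tsum_eq]

lemma expMoment_le_of_compl_Icc {θ C : ℝ} (hθ : 0 ≤ θ) {μ : Measure ℝ} [IsProbabilityMeasure μ]
    (hμ : μ (Icc (-C) C)ᶜ = 0) : expMoment θ μ ≤ ENNReal.ofReal (Real.exp (θ * C)) := by
  calc expMoment θ μ ≤ ∫⁻ _, ENNReal.ofReal (Real.exp (θ * C)) ∂μ := by
        refine lintegral_mono_ae ?_
        filter_upwards [mem_ae_iff.2 hμ] with x hx
        gcongr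
        exact abs_le.2 hx
    _ = ENNReal.ofReal (Real.exp (θ * C)) := by simp

noncomputable def probConvPow (μ : ProbabilityMeasure ℝ) (n : ℕ) : ProbabilityMeasure ℝ :=
  ⟨convPow μ n, inferInstance⟩

lemma continuous_probConvPow (n : ℕ) :
    Continuous fun μ : ProbabilityMeasure ℝ => probConvPow μ n := by
  induction n with
  | zero =>
    exact (continuous_const (y := diracProba 0)).congr fun μ => Subtype.ext rfl
  | succ n ih =>
    have h : Continuous fun μ : ProbabilityMeasure ℝ =>
        ((probConvPow μ n).prod μ).map continuous_add.measurable.aemeasurable :=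
      (ProbabilityMeasure.continuous_map continuous_add).comp
        (ProbabilityMeasure.continuous_prod.comp (ih.prodMk continuous_id))
    exact h.congr fun μ => Subtype.ext rfl

noncomputable def probCPoisson {c : ℝ} (hc : 0 ≤ c) (μ : ProbabilityMeasure ℝ) :
    ProbabilityMeasure ℝ :=
  ⟨cPoisson c μ, isProbabilityMeasure_cPoisson hc μ⟩

lemma continuous_probCPoisson {c : ℝ} (hc : 0 ≤ c) : Continuous (probCPoisson hc) := by
  refine ProbabilityMeasure.continuous_iff_forall_continuous_integral.2 fun f => ?_
  have hsum : Continuous fun μ : ProbabilityMeasure ℝ =>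
      ∑' n, poissonWeight c n * ∫ x, f x ∂(probConvPow μ n) := by
    refine continuous_tsum (fun n => ?_) ((hasSum_poissonWeight hc).summable.mul_right ‖f‖)
      fun n μ => ?_
    · exact continuous_const.mul
        ((ProbabilityMeasure.continuous_integral_boundedContinuousFunction f).comp
          (continuous_probConvPow n))
    · rw [norm_mul, Real.norm_of_nonneg (poissonWeight_nonneg hc n)]
      exact mul_le_mul_of_nonneg_left (f.norm_integral_le_norm _) (poissonWeight_nonneg hc n)
  refine hsum.congr fun μ => ?_
  have := isProbabilityMeasure_cPoisson hc μ
  exact (integral_cPoisson hc (f.integrable _)).symm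

lemma abs_sub_clamp_le_sq_div {y R : ℝ} (hR : 0 < R) :
    |y - max (-R) (min R y)| ≤ y ^ 2 / R := by
  rw [le_div_iff₀ hR]
  rcases le_total y R with h₁ | h₁
  · rw [min_eq_right h₁]
    rcases le_total (-R) y with h₂ | h₂
    · rw [max_eq_right h₂, sub_self, abs_zero, zero_mul]
      positivity
    · rw [max_eq_left h₂, abs_of_nonpos (by linarith)]
      nlinarith
  · rw [min_eq_left h₁, max_eq_right (by linarith), abs_of_nonneg (by linarith)]
    nlinarith

section WeakConvergence

open BoundedContinuousFunction

variable {X : Type*} [TopologicalSpace X] [MeasurableSpace X] [OpensMeasurableSpace X]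

noncomputable def BoundedContinuousFunction.clamp {H : X → ℝ} (hH : Continuous H) {R : ℝ}
    (hR : 0 ≤ R) : X →ᵇ ℝ :=
  .ofNormedAddCommGroup (fun x => max (-R) (min R (H x))) (by fun_prop) R fun x =>
    abs_le.2 ⟨le_max_left _ _, max_le (by linarith) (min_le_left _ _)⟩

lemma abs_integral_sub_integral_clamp_le {H : X → ℝ} (hH : Continuous H) {R : ℝ} (hR : 0 < R)
    {ν : Measure X} [IsProbabilityMeasure ν] (hH2 : Integrable (fun x => H x ^ 2) ν) :
    |∫ x, H x ∂ν - ∫ x, BoundedContinuousFunction.clamp hH hR.le x ∂ν| ≤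
      (∫ x, H x ^ 2 ∂ν) / R := by
  have hHint : Integrable H ν :=
    ((memLp_two_iff_integrable_sq hH.aestronglyMeasurable).2 hH2).integrable one_le_two
  rw [← integral_sub hHint ((BoundedContinuousFunction.clamp hH hR.le).integrable ν),
    ← integral_div]
  refine (Real.norm_eq_abs _).symm.le.trans
    (norm_integral_le_of_norm_le (hH2.div_const R) (ae_of_all _ fun x => ?_))
  simpa [BoundedContinuousFunction.clamp] using abs_sub_clamp_le_sq_div (y := H x) hR

lemma exists_tendsto_probabilityMeasure_of_tendsto_integral {ι : Type*} {L : Filter ι}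
    {s : Set ι} (hs : s ∈ L) {ν : ι → Measure X} (hν : ∀ i ∈ s, IsProbabilityMeasure (ν i))
    {μ : ProbabilityMeasure X}
    (hνμ : ∀ f : X →ᵇ ℝ, Tendsto (fun i => ∫ x, f x ∂(ν i)) L (𝓝 (∫ x, f x ∂μ))) :
    ∃ P : ι → ProbabilityMeasure X, (∀ᶠ i in L, (P i : Measure X) = ν i) ∧ Tendsto P L (𝓝 μ) := by
  classical
  let P : ι → ProbabilityMeasure X := fun i => if h : i ∈ s then ⟨ν i, hν i h⟩ else μ
  have hPν : ∀ᶠ i in L, (P i : Measure X) = ν i := mem_of_superset hs fun i h => by simp [P, h]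
  exact ⟨P, hPν, ProbabilityMeasure.tendsto_iff_forall_integral_tendsto.2 fun f =>
    (hνμ f).congr' (hPν.mono fun i hi => by simp only [hi])⟩

theorem tendsto_integral_of_tendsto_of_integral_sq_le {ι : Type*} {L : Filter ι}
    {μs : ι → ProbabilityMeasure X} {μ : ProbabilityMeasure X} (hμs : Tendsto μs L (𝓝 μ))
    {H : X → ℝ} (hH : Continuous H) {M : ℝ}
    (hμs2 : ∀ᶠ i in L, Integrable (fun x => H x ^ 2) (μs i) ∧ ∫ x, H x ^ 2 ∂(μs i) ≤ M)
    (hμ2 : Integrable (fun x => H x ^ 2) μ ∧ ∫ x, H x ^ 2 ∂μ ≤ M) :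
    Tendsto (fun i => ∫ x, H x ∂(μs i)) L (𝓝 (∫ x, H x ∂μ)) := by
  rw [Metric.tendsto_nhds]
  intro δ hδ
  obtain ⟨R, hRδ, hR⟩ : ∃ R : ℝ, M / R < δ / 3 ∧ 0 < R :=
    (((tendsto_const_nhds.div_atTop tendsto_id).eventually (gt_mem_nhds (by positivity))).and
      (eventually_gt_atTop 0)).exists
  have hclamp := ProbabilityMeasure.tendsto_iff_forall_integral_tendsto.1 hμs
    (BoundedContinuousFunction.clamp hH hR.le)
  filter_upwards [Metric.tendsto_nhds.1 hclamp (δ / 3) (by positivity), hμs2] with i hi hi2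
  have hi' := abs_integral_sub_integral_clamp_le hH hR hi2.1
  have h' := abs_integral_sub_integral_clamp_le hH hR hμ2.1
  have hMi : (∫ x, H x ^ 2 ∂(μs i)) / R ≤ M / R := by gcongr; exact hi2.2
  have hM : (∫ x, H x ^ 2 ∂μ) / R ≤ M / R := by gcongr; exact hμ2.2
  rw [Real.dist_eq] at hi ⊢
  obtain ⟨hi₁, hi₂⟩ := abs_lt.1 hi
  obtain ⟨hi'₁, hi'₂⟩ := abs_le.1 (hi'.trans hMi)
  obtain ⟨h'₁, h'₂⟩ := abs_le.1 (h'.trans hM)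
  rw [abs_lt]
  constructor <;> linarith

end WeakConvergence

lemma lintegral_fintype_prod_eq_prod {ι : Type*} [Fintype ι] {E : ι → Type*}
    [∀ i, MeasurableSpace (E i)] {μ : (i : ι) → Measure (E i)} [∀ i, IsProbabilityMeasure (μ i)]
    {f : (i : ι) → E i → ℝ≥0∞} (hf : ∀ i, Measurable (f i)) :
    ∫⁻ x, ∏ i, f i (x i) ∂(Measure.pi μ) = ∏ i, ∫⁻ y, f i y ∂(μ i) := by
  refine (lintegral_prod_eq_prod_lintegral_of_indepFun Finset.univ
    (fun i (x : (i : ι) → E i) => f i (x i)) (iIndepFun_pi fun i => (hf i).aemeasurable)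
    fun i => (hf i).comp (measurable_pi_apply i)).trans ?_
  exact Finset.prod_congr rfl fun i _ => (measurePreserving_eval μ i).lintegral_comp (hf i)

lemma integrable_sq_and_integral_sq_le_of_abs_le_exp {ι : Type*} [Fintype ι] {ν : Measure ℝ}
    [IsProbabilityMeasure ν] {κ K A : ℝ} (hA : 0 ≤ A)
    (hνA : expMoment (2 * κ) ν ≤ ENNReal.ofReal A) {H : (ι → ℝ) → ℝ} (hH : Continuous H)
    (hHb : ∀ s, |H s| ≤ K * Real.exp (κ * ∑ i, |s i|)) :
    Integrable (fun s => H s ^ 2) (Measure.pi fun _ => ν) ∧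
      ∫ s, H s ^ 2 ∂(Measure.pi fun _ => ν) ≤ K ^ 2 * A ^ Fintype.card ι := by
  have hpoint : ∀ s : ι → ℝ, H s ^ 2 ≤ K ^ 2 * ∏ i, Real.exp (2 * κ * |s i|) := fun s =>
    calc H s ^ 2 = |H s| ^ 2 := (sq_abs _).symm
      _ ≤ (K * Real.exp (κ * ∑ i, |s i|)) ^ 2 := pow_le_pow_left₀ (abs_nonneg _) (hHb s) 2
      _ = K ^ 2 * ∏ i, Real.exp (2 * κ * |s i|) := by
        rw [mul_pow, ← Real.exp_nat_mul, ← Real.exp_sum, Finset.mul_sum, Finset.mul_sum]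
        push_cast
        simp only [mul_assoc]
  have hlin : ∫⁻ s, ENNReal.ofReal (H s ^ 2) ∂(Measure.pi fun _ => ν) ≤
      ENNReal.ofReal (K ^ 2 * A ^ Fintype.card ι) :=
    calc ∫⁻ s, ENNReal.ofReal (H s ^ 2) ∂(Measure.pi fun _ => ν)
        ≤ ∫⁻ s, ENNReal.ofReal (K ^ 2) * ∏ i, ENNReal.ofReal (Real.exp (2 * κ * |s i|))
            ∂(Measure.pi fun _ => ν) := by
          refine lintegral_mono fun s => ?_
          rw [← ENNReal.ofReal_prod_of_nonneg fun i _ => (Real.exp_pos _).le,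
            ← ENNReal.ofReal_mul (sq_nonneg K)]
          exact ENNReal.ofReal_le_ofReal (hpoint s)
      _ = ENNReal.ofReal (K ^ 2) * ∏ _ : ι, expMoment (2 * κ) ν := by
          rw [lintegral_const_mul _ (by fun_prop), lintegral_fintype_prod_eq_prod
            (f := fun _ y => ENNReal.ofReal (Real.exp (2 * κ * |y|))) fun _ => by fun_prop]
          rfl
      _ ≤ ENNReal.ofReal (K ^ 2 * A ^ Fintype.card ι) := by
          rw [Finset.prod_const, Finset.card_univ, ENNReal.ofReal_mul (sq_nonneg K),
            ENNReal.ofReal_pow hA]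
          gcongr
  have hnonneg : 0 ≤ᵐ[Measure.pi fun _ => ν] fun s => H s ^ 2 := ae_of_all _ fun s => sq_nonneg _
  have hmeas : AEStronglyMeasurable (fun s => H s ^ 2) (Measure.pi fun _ => ν) :=
    (hH.pow 2).aestronglyMeasurable
  refine ⟨⟨hmeas, (hasFiniteIntegral_iff_ofReal hnonneg).2 (hlin.trans_lt ofReal_lt_top)⟩, ?_⟩
  rw [integral_eq_lintegral_of_nonneg_ae hnonneg hmeas]
  exact ENNReal.toReal_le_of_le_ofReal (by positivity) hlin

lemma integrable_sq_and_integral_sq_pi_cPoisson_le {ι : Type*} [Fintype ι] {c C κ K : ℝ}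
    (hc : 0 ≤ c) (hκ : 0 ≤ κ) {r : Measure ℝ} [IsProbabilityMeasure r]
    (hr : r (Icc (-C) C)ᶜ = 0) {H : (ι → ℝ) → ℝ} (hH : Continuous H)
    (hHb : ∀ s, |H s| ≤ K * Real.exp (κ * ∑ i, |s i|)) :
    Integrable (fun s => H s ^ 2) (Measure.pi fun _ => cPoisson c r) ∧
      ∫ s, H s ^ 2 ∂(Measure.pi fun _ => cPoisson c r) ≤
        K ^ 2 * Real.exp (c * (Real.exp (2 * κ * C) - 1)) ^ Fintype.card ι := by
  have := isProbabilityMeasure_cPoisson hc r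
  have hθ : 0 ≤ 2 * κ := by positivity
  exact integrable_sq_and_integral_sq_le_of_abs_le_exp (Real.exp_pos _).le
    (expMoment_cPoisson_le hc hθ (Real.exp_pos _).le (expMoment_le_of_compl_Icc hθ hr)) hH hHb

theorem cPoisson_product_integral_tendsto_general
    (C : ℝ) (c : ℝ) (hc : 0 < c) (m : ℕ)
    (rε : ℝ → Measure ℝ) (r : Measure ℝ)
    (hprobε : ∀ ε ∈ Set.Ioc (0 : ℝ) 1, IsProbabilityMeasure (rε ε))
    (hprob : IsProbabilityMeasure r)
    (hsuppε : ∀ ε ∈ Set.Ioc (0 : ℝ) 1, rε ε (Set.Icc (-C) C)ᶜ = 0)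
    (hsupp : r (Set.Icc (-C) C)ᶜ = 0)
    (hweak : ∀ f : BoundedContinuousFunction ℝ ℝ,
      Filter.Tendsto (fun ε => ∫ x, f x ∂(rε ε)) (nhdsWithin 0 (Set.Ioc 0 1))
        (nhds (∫ x, f x ∂r)))
    (H : (Fin m → ℝ) → ℝ) (hH : Continuous H)
    (K κ : ℝ) (hκ : 0 < κ)
    (hHb : ∀ s, |H s| ≤ K * Real.exp (κ * ∑ i, |s i|)) :
    Filter.Tendsto
      (fun ε => ∫ s, H s ∂(Measure.pi fun _ : Fin m => cPoisson c (rε ε)))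
      (nhdsWithin 0 (Set.Ioc 0 1))
      (nhds (∫ s, H s ∂(Measure.pi fun _ : Fin m => cPoisson c r))) := by
  obtain ⟨P, hPr, hP⟩ := exists_tendsto_probabilityMeasure_of_tendsto_integral
    self_mem_nhdsWithin hprobε (μ := ⟨r, hprob⟩) hweak
  let Q : ProbabilityMeasure ℝ → ProbabilityMeasure (Fin m → ℝ) := fun μ =>
    .pi fun _ => probCPoisson hc.le μ
  have hQ : Continuous Q := ProbabilityMeasure.continuous_pi.comp
    (continuous_pi fun _ => continuous_probCPoisson hc.le)
  have hmoment := fun (μ : ProbabilityMeasure ℝ) (hμ : (μ : Measure ℝ) (Icc (-C) C)ᶜ = 0) =>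
    integrable_sq_and_integral_sq_pi_cPoisson_le (ι := Fin m) hc.le hκ.le hμ hH hHb
  refine (tendsto_integral_of_tendsto_of_integral_sq_le ((hQ.tendsto _).comp hP) hH ?_
    (hmoment _ hsupp)).congr' ?_
  · filter_upwards [hPr, self_mem_nhdsWithin] with ε hε hεI
    exact hmoment _ (hε ▸ hsuppε ε hεI)
  · filter_upwards [hPr] with ε hε
    simp only [Function.comp_apply, Q, probCPoisson, hε]
    rfl

/-- if probability measures `r_ε`, all supported in `[-C,C]`, converge
weakly to `r` as `ε ↘ 0`, then for every continuous exponentially bounded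
`H : ℝ^m → ℝ` the integrals with respect to the `m`-fold products of the compound
Poisson measures converge:
`∫ H d(ρ_{c,r_ε})^{⊗m} → ∫ H d(ρ_{c,r})^{⊗m}`. -/
theorem cPoisson_product_integral_tendsto
    (C : ℝ) (hC : 0 < C) (c : ℝ) (hc : 0 < c) (m : ℕ) (hm : 1 ≤ m)
    (rε : ℝ → Measure ℝ) (r : Measure ℝ)
    (hprobε : ∀ ε ∈ Set.Ioc (0 : ℝ) 1, IsProbabilityMeasure (rε ε))
    (hprob : IsProbabilityMeasure r)
    (hsuppε : ∀ ε ∈ Set.Ioc (0 : ℝ) 1, rε ε (Set.Icc (-C) C)ᶜ = 0)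
    (hsupp : r (Set.Icc (-C) C)ᶜ = 0)
    (hweak : ∀ f : BoundedContinuousFunction ℝ ℝ,
      Filter.Tendsto (fun ε => ∫ x, f x ∂(rε ε)) (nhdsWithin 0 (Set.Ioc 0 1))
        (nhds (∫ x, f x ∂r)))
    (H : (Fin m → ℝ) → ℝ) (hH : Continuous H)
    (K κ : ℝ) (hK : 0 < K) (hκ : 0 < κ)
    (hHb : ∀ s, |H s| ≤ K * Real.exp (κ * ∑ i, |s i|)) :
    Filter.Tendsto
      (fun ε => ∫ s, H s ∂(Measure.pi fun _ : Fin m => cPoisson c (rε ε)))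
      (nhdsWithin 0 (Set.Ioc 0 1))
      (nhds (∫ s, H s ∂(Measure.pi fun _ : Fin m => cPoisson c r))) :=
  cPoisson_product_integral_tendsto_general C c hc m rε r hprobε hprob hsuppε hsupp hweak H hH K κ
    hκ hHb
end

section
/- Let v, f_1,…,f_m, g, W be as in the context. Then W is twice differentiable on ℝ^m, and for all j ≠ l and all η ∈ ℝ^m the mixed second partial derivative satisfies ∂²W/∂η_j ∂η_l (η) = ∫_{ℝ^d} v''(∑_{i=1}^m η_i f_i(x)) f_j(x) f_l(x) g(x) dx ≤ 0; i.e., W satisfies the logarithmic FKG criterion off the diagonal. -/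
/-!
Differentiation under the integral sign. Writing `L x η = ∑ i, η i * f i x`, the integrand
`v (L x η) * g x` and its first two derivatives in `η` are jointly continuous in `(η, x)` and
vanish for `x` outside the compact set `tsupport g`; near any `η₀` they are therefore dominated
by a multiple of the indicator of `tsupport g`. So `W` is `C²` with
`∂_l ∂_j W η = ∫ v'' (L x η) * f j x * f l x * g x`, which is `≤ 0` because `v'' ≤ 0` and
`f, g ≥ 0`.
-/

open MeasureTheory Filter Topology

section UniformCompactSupport

variable {X E G : Type*} [TopologicalSpace X] [T2Space X] [MeasurableSpace X]
  [OpensMeasurableSpace X] {μ : Measure X} [IsFiniteMeasureOnCompacts μ]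
  [NormedAddCommGroup G] {K : Set X}

theorem integrable_of_uniform_compact_support [TopologicalSpace E] {F : E → X → G}
    (hF : Continuous (Function.uncurry F)) (hK : IsCompact K)
    (hFK : ∀ η, ∀ x ∉ K, F η x = 0) (η : E) : Integrable (F η) μ :=
  (hF.uncurry_left η).integrable_of_hasCompactSupport (HasCompactSupport.intro hK (hFK η))

theorem exists_integrable_bound_nhds [TopologicalSpace E] {F : E → X → G}
    (hF : Continuous (Function.uncurry F)) (hK : IsCompact K)
    (hFK : ∀ η, ∀ x ∉ K, F η x = 0) (η₀ : E) :
    ∃ bound : X → ℝ, Integrable bound μ ∧ ∀ᶠ η in 𝓝 η₀, ∀ x, ‖F η x‖ ≤ bound x := by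
  obtain ⟨C, hC⟩ := ((isCompact_singleton (x := η₀)).prod hK).exists_bound_of_continuousOn
    hF.continuousOn
  -- tube lemma: `‖F‖ < C + 1` on `U ×ˢ V ⊇ {η₀} ×ˢ K`
  obtain ⟨U, V, hU, -, hη₀U, hKV, hUV⟩ := generalized_tube_lemma isCompact_singleton hK
    (isOpen_lt hF.norm continuous_const) fun p hp => (hC p hp).trans_lt (lt_add_one C)
  refine ⟨K.indicator fun _ => C + 1,
    (integrable_indicator_iff hK.measurableSet).2 (integrableOn_const hK.measure_ne_top),
    eventually_of_mem (hU.mem_nhds (hη₀U rfl)) fun η hη x => ?_⟩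
  by_cases hx : x ∈ K
  · simpa [hx] using (hUV (Set.mk_mem_prod hη (hKV hx))).le
  · simp [hx, hFK η x hx]

variable [NormedSpace ℝ G]

theorem continuous_integral_of_uniform_compact_support [TopologicalSpace E]
    [FirstCountableTopology E] {F : E → X → G}
    (hF : Continuous (Function.uncurry F)) (hK : IsCompact K)
    (hFK : ∀ η, ∀ x ∉ K, F η x = 0) :
    Continuous fun η => ∫ x, F η x ∂μ := by
  refine continuous_iff_continuousAt.2 fun η₀ => ?_
  obtain ⟨bound, hbound, hle⟩ := exists_integrable_bound_nhds (μ := μ) hF hK hFK η₀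
  exact continuousAt_of_dominated
    (Eventually.of_forall fun η => (integrable_of_uniform_compact_support hF hK hFK η).1)
    (hle.mono fun η hη => ae_of_all _ hη) hbound
    (ae_of_all _ fun x => (hF.uncurry_right x).continuousAt)

theorem hasFDerivAt_integral_of_uniform_compact_support
    [NormedAddCommGroup E] [NormedSpace ℝ E] {F : E → X → G} {F' : E → X → E →L[ℝ] G}
    (hF : Continuous (Function.uncurry F)) (hF' : Continuous (Function.uncurry F'))
    (hK : IsCompact K) (hFK : ∀ η, ∀ x ∉ K, F η x = 0)
    (hFF' : ∀ η x, HasFDerivAt (F · x) (F' η x) η) (η₀ : E) :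
    HasFDerivAt (fun η => ∫ x, F η x ∂μ) (∫ x, F' η₀ x ∂μ) η₀ := by
  have hF'K : ∀ η, ∀ x ∉ K, F' η x = 0 := fun η x hx =>
    (hFF' η x).unique (by simpa [hFK _ x hx] using hasFDerivAt_const (0 : G) η)
  obtain ⟨bound, hbound, hle⟩ := exists_integrable_bound_nhds (μ := μ) hF' hK hF'K η₀
  exact hasFDerivAt_integral_of_dominated_of_fderiv_le hle
    (Eventually.of_forall fun η => (integrable_of_uniform_compact_support hF hK hFK η).1)
    (integrable_of_uniform_compact_support hF hK hFK η₀)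
    (integrable_of_uniform_compact_support hF' hK hF'K η₀).1
    (ae_of_all _ fun x η hη => hη x) hbound (ae_of_all _ fun x η _ => hFF' η x)

end UniformCompactSupport

section CompositeIntegrand

variable {X E : Type*} [TopologicalSpace X] [T2Space X] [MeasurableSpace X]
  [OpensMeasurableSpace X] {μ : Measure X} [IsFiniteMeasureOnCompacts μ]
  [NormedAddCommGroup E] [NormedSpace ℝ E] {L : X → E →L[ℝ] ℝ} {h : X → ℝ}

theorem hasFDerivAt_integral_comp_mul {u : ℝ → ℝ} (hu : ContDiff ℝ 1 u) (hL : Continuous L)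
    (hh : Continuous h) (hhs : HasCompactSupport h) (η₀ : E) :
    HasFDerivAt (fun η => ∫ x, u (L x η) * h x ∂μ)
      (∫ x, (deriv u (L x η₀) * h x) • L x ∂μ) η₀ := by
  have hu' := hu.continuous_deriv le_rfl
  refine hasFDerivAt_integral_of_uniform_compact_support (K := tsupport h)
    (F := fun η x => u (L x η) * h x) (F' := fun η x => (deriv u (L x η) * h x) • L x)
    (by fun_prop) (by fun_prop) hhs
    (fun η x hx => by simp [image_eq_zero_of_notMem_tsupport hx]) (fun η x => ?_) η₀
  have hux : HasDerivAt u (deriv u (L x η)) (L x η) :=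
    (hu.differentiable one_ne_zero _).hasDerivAt
  have hFx := (hux.comp_hasFDerivAt η (L x).hasFDerivAt).mul_const (h x)
  rw [smul_smul, mul_comm] at hFx
  exact hFx

variable {w : ℝ → ℝ}

theorem integrable_comp_mul_smul (hw : Continuous w) (hL : Continuous L) (hh : Continuous h)
    (hhs : HasCompactSupport h) (η : E) :
    Integrable (fun x => (w (L x η) * h x) • L x) μ :=
  integrable_of_uniform_compact_support (K := tsupport h)
    (F := fun η x => (w (L x η) * h x) • L x) (by fun_prop) hhs
    (fun η x hx => by simp [image_eq_zero_of_notMem_tsupport hx]) η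

theorem continuous_integral_comp_mul_smul (hw : Continuous w) (hL : Continuous L)
    (hh : Continuous h) (hhs : HasCompactSupport h) :
    Continuous fun η => ∫ x, (w (L x η) * h x) • L x ∂μ :=
  continuous_integral_of_uniform_compact_support (K := tsupport h)
    (F := fun η x => (w (L x η) * h x) • L x) (by fun_prop) hhs
    fun η x hx => by simp [image_eq_zero_of_notMem_tsupport hx]

end CompositeIntegrand

section Energy

variable {X E : Type*} [TopologicalSpace X] [T2Space X] [MeasurableSpace X]
  [OpensMeasurableSpace X] {μ : Measure X} [IsFiniteMeasureOnCompacts μ]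
  [NormedAddCommGroup E] [NormedSpace ℝ E] {L : X → E →L[ℝ] ℝ} {v : ℝ → ℝ} {g : X → ℝ}
  {W : E → ℝ}

theorem fderiv_apply_eq_integral (hW : ∀ η, W η = ∫ x, v (L x η) * g x ∂μ)
    (hv : ContDiff ℝ 1 v) (hL : Continuous L) (hg : Continuous g) (hgs : HasCompactSupport g)
    (η y : E) : fderiv ℝ W η y = ∫ x, deriv v (L x η) * (g x * L x y) ∂μ := by
  obtain rfl : W = _ := funext hW
  rw [(hasFDerivAt_integral_comp_mul hv hL hg hgs η).fderiv,
    ContinuousLinearMap.integral_apply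
      (integrable_comp_mul_smul (hv.continuous_deriv le_rfl) hL hg hgs η)]
  simp only [smul_apply, smul_eq_mul, mul_assoc]

theorem hasFDerivAt_fderiv_apply (hW : ∀ η, W η = ∫ x, v (L x η) * g x ∂μ)
    (hv : ContDiff ℝ 2 v) (hL : Continuous L) (hg : Continuous g) (hgs : HasCompactSupport g)
    (y η₀ : E) :
    HasFDerivAt (fun η => fderiv ℝ W η y)
      (∫ x, (deriv (deriv v) (L x η₀) * (g x * L x y)) • L x ∂μ) η₀ := by
  simp only [fderiv_apply_eq_integral hW (hv.of_le one_le_two) hL hg hgs]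
  exact hasFDerivAt_integral_comp_mul (hv.deriv' (n := 1)) hL (by fun_prop) hgs.mul_right η₀

theorem contDiff_two_of_eq_integral [FiniteDimensional ℝ E]
    (hW : ∀ η, W η = ∫ x, v (L x η) * g x ∂μ) (hv : ContDiff ℝ 2 v) (hL : Continuous L)
    (hg : Continuous g) (hgs : HasCompactSupport g) : ContDiff ℝ 2 W := by
  have hv₂ : Continuous (deriv (deriv v)) := (hv.deriv' (n := 1)).continuous_deriv_one
  have hWd : Differentiable ℝ W := fun η => by
    rw [show W = _ from funext hW]
    exact (hasFDerivAt_integral_comp_mul (hv.of_le one_le_two) hL hg hgs η).differentiableAt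
  refine (contDiff_succ_iff_fderiv_apply (n := 1)).2 ⟨hWd, by simp, fun y => ?_⟩
  refine contDiff_one_iff_fderiv.2
    ⟨fun η => (hasFDerivAt_fderiv_apply hW hv hL hg hgs y η).differentiableAt, ?_⟩
  rw [show fderiv ℝ (fun η => fderiv ℝ W η y) = _ from
    funext fun η => (hasFDerivAt_fderiv_apply hW hv hL hg hgs y η).fderiv]
  exact continuous_integral_comp_mul_smul hv₂ hL (by fun_prop) hgs.mul_right

theorem fderiv_fderiv_apply_eq_integral (hW : ∀ η, W η = ∫ x, v (L x η) * g x ∂μ)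
    (hv : ContDiff ℝ 2 v) (hL : Continuous L) (hg : Continuous g) (hgs : HasCompactSupport g)
    (η y z : E) :
    fderiv ℝ (fun η' => fderiv ℝ W η' y) η z
      = ∫ x, deriv (deriv v) (L x η) * (L x y * L x z * g x) ∂μ := by
  have hv₂ : Continuous (deriv (deriv v)) := (hv.deriv' (n := 1)).continuous_deriv_one
  rw [(hasFDerivAt_fderiv_apply hW hv hL hg hgs y η).fderiv, ContinuousLinearMap.integral_apply
    (integrable_comp_mul_smul (h := fun x => g x * L x y) hv₂ hL (by fun_prop) hgs.mul_right η)]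
  simp only [smul_apply, smul_eq_mul]
  congr 1 with x
  ring

end Energy

theorem lattice_energy_mixed_partials_nonpos_general
    (d m : ℕ)
    (v : ℝ → ℝ) (hv : ContDiff ℝ 2 v)
    (hv'' : ∀ t, deriv (deriv v) t ≤ 0)
    (f : Fin m → (Fin d → ℝ) → ℝ) (hf0 : ∀ j x, 0 ≤ f j x)
    (hfc : ∀ j, Continuous (f j))
    (g : (Fin d → ℝ) → ℝ) (hg0 : ∀ x, 0 ≤ g x)
    (hgc : Continuous g) (hgs : HasCompactSupport g)
    (W : (Fin m → ℝ) → ℝ)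
    (hW : ∀ η, W η = ∫ x, v (∑ j, η j * f j x) * g x) :
    ContDiff ℝ 2 W ∧
      ∀ j l : Fin m, j ≠ l → ∀ η : Fin m → ℝ,
        (fderiv ℝ (fun η' => fderiv ℝ W η' (Pi.single j 1)) η) (Pi.single l 1)
            = ∫ x, deriv (deriv v) (∑ i, η i * f i x) * (f j x * f l x * g x) ∧
          (fderiv ℝ (fun η' => fderiv ℝ W η' (Pi.single j 1)) η) (Pi.single l 1) ≤ 0 := by
  set L : (Fin d → ℝ) → (Fin m → ℝ) →L[ℝ] ℝ :=
    fun x => ∑ i, f i x • ContinuousLinearMap.proj i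
  have hLapply : ∀ x η, L x η = ∑ i, η i * f i x := fun x η => by simp [L, mul_comm]
  have hL : Continuous L := continuous_finsetSum _ fun i _ => (hfc i).smul continuous_const
  have hWL : ∀ η, W η = ∫ x, v (L x η) * g x := by simpa only [hLapply] using hW
  have hpartial : ∀ j l η, fderiv ℝ (fun η' => fderiv ℝ W η' (Pi.single j 1)) η (Pi.single l 1)
      = ∫ x, deriv (deriv v) (∑ i, η i * f i x) * (f j x * f l x * g x) := fun j l η => by
    simpa [hLapply, Pi.single_apply] using
      fderiv_fderiv_apply_eq_integral hWL hv hL hgc hgs η (Pi.single j 1) (Pi.single l 1)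
  refine ⟨contDiff_two_of_eq_integral hWL hv hL hgc hgs, fun j l _ η => ⟨hpartial j l η, ?_⟩⟩
  rw [hpartial]
  exact integral_nonpos fun x =>
    mul_nonpos_of_nonpos_of_nonneg (hv'' _) (mul_nonneg (mul_nonneg (hf0 j x) (hf0 l x)) (hg0 x))

/-- the lattice energy `W(η) = ∫ v(∑_j η_j f_j(x)) g(x) dx` is twice
(continuously) differentiable, and for `j ≠ l` its mixed second partial derivative
equals `∫ v''(∑_i η_i f_i(x)) f_j(x) f_l(x) g(x) dx ≤ 0` (logarithmic FKG
criterion off the diagonal, equation (3.12) of the paper). -/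
theorem lattice_energy_mixed_partials_nonpos
    (d m : ℕ) (hm : 1 ≤ m)
    (v : ℝ → ℝ) (hv : ContDiff ℝ 2 v) (hv0 : v 0 = 0)
    (b : ℝ) (hb : 0 < b) (hv' : ∀ t, |deriv v t| ≤ b)
    (hv'' : ∀ t, deriv (deriv v) t ≤ 0)
    (f : Fin m → (Fin d → ℝ) → ℝ) (hf0 : ∀ j x, 0 ≤ f j x)
    (hfc : ∀ j, Continuous (f j)) (hfs : ∀ j, HasCompactSupport (f j))
    (g : (Fin d → ℝ) → ℝ) (hg0 : ∀ x, 0 ≤ g x)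
    (hgc : Continuous g) (hgs : HasCompactSupport g)
    (W : (Fin m → ℝ) → ℝ)
    (hW : ∀ η, W η = ∫ x, v (∑ j, η j * f j x) * g x) :
    ContDiff ℝ 2 W ∧
      ∀ j l : Fin m, j ≠ l → ∀ η : Fin m → ℝ,
        (fderiv ℝ (fun η' => fderiv ℝ W η' (Pi.single j 1)) η) (Pi.single l 1)
            = ∫ x, deriv (deriv v) (∑ i, η i * f i x) * (f j x * f l x * g x) ∧
          (fderiv ℝ (fun η' => fderiv ℝ W η' (Pi.single j 1)) η) (Pi.single l 1) ≤ 0 :=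
  lattice_energy_mixed_partials_nonpos_general d m v hv hv'' f hf0 hfc g hg0 hgc hgs W hW
end
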